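/- Let $A_m$, $A_f$, $A_s$ be square real matrices of sizes $n_m$, $n_f$, $n_s$ respectively, with $A_m$ and $A_f$ invertible, and let $A_{ms}$, $A_{fm}$, $A_{fs}$, $A_{sf}$ be rectangular real matrices of compatible sizes. Define $\tilde{A}_{fs} = A_{fs} - A_{fm} A_m^{-1} A_{ms}$ and the structure Schur complement $S = A_s - A_{sf} A_f^{-1} \tilde{A}_{fs}$. Then $\begin{pmatrix} A_m & 0 & A_{ms} \\ A_{fm} & A_f & A_{fs} \\ 0 & A_{sf} & A_s \end{pmatrix} = \begin{pmatrix} I & 0 & 0 \\ A_{fm} A_m^{-1} & I & 0 \\ 0 & A_{sf} A_f^{-1} & I \end{pmatrix} \begin{pmatrix} A_m & 0 & 0 \\ 0 & A_f & 0 \\ 0 & 0 & S \end{pmatrix} \begin{pmatrix} I & 0 & A_m^{-1} A_{ms} \\ 0 & I & A_f^{-1} \tilde{A}_{fs} \\ 0 & 0 & I \end{pmatrix}$. -/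

import Mathlib

/-! Two nested block LDU factorizations: eliminating the pivot `Am` leaves the Schur complement
`fromBlocks Af Ãfs Asf As` in the (fluid, structure) block, since the mesh block couples only to
the fluid rows and the structure columns; eliminating the pivot `Af` in that complement leaves `S`.
The inner unitriangular and diagonal factors then merge into the outer ones. -/

open Matrix

namespace Matrix

variable {l m n α : Type*}

theorem fromBlocks_eq_of_isUnit₁₁ [Fintype l] [Fintype m] [Fintype n]
    [DecidableEq l] [DecidableEq m] [DecidableEq n] [CommRing α] {A : Matrix m m α}
    (hA : IsUnit A) (B : Matrix m n α) (C : Matrix l m α) (D : Matrix l n α) :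
    fromBlocks A B C D =
      fromBlocks (1 : Matrix m m α) 0 (C * A⁻¹) (1 : Matrix l l α) *
        fromBlocks A 0 0 (D - C * A⁻¹ * B) * fromBlocks 1 (A⁻¹ * B) 0 1 := by
  have := hA.invertible
  rw [← invOf_eq_nonsing_inv]
  exact fromBlocks_eq_of_invertible₁₁ A B C D

theorem fromBlocks_ldu_of_ldu₂₂ [Fintype l] [Fintype m] [DecidableEq l] [DecidableEq m]
    [Semiring α] (A : Matrix m m α) (B : Matrix m l α) (C : Matrix l m α)
    (L D U : Matrix l l α) :
    fromBlocks 1 0 C 1 * fromBlocks A 0 0 (L * D * U) * fromBlocks 1 B 0 1 =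
      fromBlocks 1 0 C L * fromBlocks A 0 0 D * fromBlocks 1 B 0 U := by
  simp only [fromBlocks_multiply, Matrix.mul_one, Matrix.one_mul, Matrix.mul_zero,
    Matrix.zero_mul, add_zero, zero_add, Matrix.mul_assoc]

theorem fromRows_zero_mul_mul_fromCols_zero {m₁ m₂ n₁ n₂ : Type*} [Fintype m] [Fintype n]
    [Semiring α] (X : Matrix m₁ m α) (M : Matrix m n α) (Y : Matrix n n₂ α) :
    fromRows X (0 : Matrix m₂ m α) * M * fromCols (0 : Matrix n n₁ α) Y =
      fromBlocks 0 (X * M * Y) 0 0 := by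
  rw [fromRows_mul, Matrix.zero_mul, fromRows_mul_fromCols]
  simp

end Matrix

/-- The `LDU` factorization of the original (mesh, fluid, structure)-ordered FSI
system matrix based on the structure Schur complement
`S = As - Asf Af⁻¹ Ãfs` with `Ãfs = Afs - Afm Am⁻¹ Ams`. -/
theorem fsi_structure_schur_LDU_factorization
    (nm nf ns : ℕ)
    (Am : Matrix (Fin nm) (Fin nm) ℝ)
    (Af : Matrix (Fin nf) (Fin nf) ℝ)
    (As : Matrix (Fin ns) (Fin ns) ℝ)
    (Ams : Matrix (Fin nm) (Fin ns) ℝ)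
    (Afm : Matrix (Fin nf) (Fin nm) ℝ)
    (Afs : Matrix (Fin nf) (Fin ns) ℝ)
    (Asf : Matrix (Fin ns) (Fin nf) ℝ)
    (hAm : IsUnit Am) (hAf : IsUnit Af) :
    let Atfs : Matrix (Fin nf) (Fin ns) ℝ := Afs - Afm * Am⁻¹ * Ams
    let S : Matrix (Fin ns) (Fin ns) ℝ := As - Asf * Af⁻¹ * Atfs
    let K : Matrix (Fin nm ⊕ (Fin nf ⊕ Fin ns)) (Fin nm ⊕ (Fin nf ⊕ Fin ns)) ℝ :=
      fromBlocks Am (fromCols 0 Ams) (fromRows Afm 0) (fromBlocks Af Afs Asf As)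
    let L : Matrix (Fin nm ⊕ (Fin nf ⊕ Fin ns)) (Fin nm ⊕ (Fin nf ⊕ Fin ns)) ℝ :=
      fromBlocks 1 0 (fromRows (Afm * Am⁻¹) 0) (fromBlocks 1 0 (Asf * Af⁻¹) 1)
    let D : Matrix (Fin nm ⊕ (Fin nf ⊕ Fin ns)) (Fin nm ⊕ (Fin nf ⊕ Fin ns)) ℝ :=
      fromBlocks Am 0 0 (fromBlocks Af 0 0 S)
    let U : Matrix (Fin nm ⊕ (Fin nf ⊕ Fin ns)) (Fin nm ⊕ (Fin nf ⊕ Fin ns)) ℝ :=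
      fromBlocks 1 (fromCols 0 (Am⁻¹ * Ams)) 0 (fromBlocks 1 (Af⁻¹ * Atfs) 0 1)
    K = L * D * U := by
  intro Atfs S K L D U
  have schur_Am : fromBlocks Af Afs Asf As - fromRows Afm 0 * Am⁻¹ * fromCols 0 Ams =
      fromBlocks Af Atfs Asf As := by
    rw [fromRows_zero_mul_mul_fromCols_zero]
    ext (i | i) (j | j) <;> simp [Atfs]
  have pivot_Am := fromBlocks_eq_of_isUnit₁₁ hAm (fromCols 0 Ams) (fromRows Afm 0)
    (fromBlocks Af Afs Asf As)
  rw [schur_Am, fromBlocks_eq_of_isUnit₁₁ hAf Atfs Asf As, fromRows_mul, Matrix.zero_mul,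
    mul_fromCols, Matrix.mul_zero] at pivot_Am
  exact pivot_Am.trans (fromBlocks_ldu_of_ldu₂₂ _ _ _ _ _ _)
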